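/- arXiv:2503.24131 — 9 statements merged into one kernel-verified Lean document; each statement's English description precedes it below -/
import Mathlib

section
/- Let d ≥ 1, let f, g : EuclideanSpace ℝ (Fin d) → ℝ be differentiable at a point x, and let n be a vector of EuclideanSpace ℝ (Fin d). Suppose f(y) = g(y) for every y with ⟪y − x, n⟫ = 0 (i.e., f and g agree on the affine hyperplane through x with normal n). Then there exists c ∈ ℝ such that ∇f(x) − ∇g(x) = c • n, i.e., the jump of the gradients across the hyperplane is purely in the normal direction. -/
open RealInnerProductSpace

/-- If two differentiable functions agree on the affine hyperplane through `x` with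
normal `n`, then the jump of their gradients at `x` is purely in the normal direction. -/
theorem gradient_jump_normal
    (d : ℕ) (hd : 1 ≤ d)
    (f g : EuclideanSpace ℝ (Fin d) → ℝ) (x n : EuclideanSpace ℝ (Fin d))
    (hf : DifferentiableAt ℝ f x) (hg : DifferentiableAt ℝ g x)
    (h : ∀ y : EuclideanSpace ℝ (Fin d), ⟪y - x, n⟫ = 0 → f y = g y) :
    ∃ c : ℝ, gradient f x - gradient g x = c • n := by
  set w := gradient f x - gradient g x with hw
  have key : ∀ v : EuclideanSpace ℝ (Fin d), ⟪v, n⟫ = 0 → ⟪w, v⟫ = 0 := by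
    intro v hv
    have hγ : ∀ t : ℝ, HasDerivAt (fun t : ℝ => x + t • v) v t := by
      intro t
      simpa using ((hasDerivAt_id t).smul_const v).const_add x
    have hxf : HasFDerivAt f (fderiv ℝ f x) (x + (0:ℝ) • v) := by
      simpa using hf.hasFDerivAt
    have hxg : HasFDerivAt g (fderiv ℝ g x) (x + (0:ℝ) • v) := by
      simpa using hg.hasFDerivAt
    have h1 : HasDerivAt (fun t : ℝ => f (x + t • v)) (fderiv ℝ f x v) 0 :=
      hxf.comp_hasDerivAt 0 (hγ 0)
    have h2 : HasDerivAt (fun t : ℝ => g (x + t • v)) (fderiv ℝ g x v) 0 :=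
      hxg.comp_hasDerivAt 0 (hγ 0)
    have heq : (fun t : ℝ => f (x + t • v)) = fun t : ℝ => g (x + t • v) := by
      funext t
      apply h
      rw [add_sub_cancel_left, real_inner_smul_left, hv, mul_zero]
    rw [heq] at h1
    have hfg : fderiv ℝ f x v = fderiv ℝ g x v := h1.unique h2
    have hgradf : ⟪gradient f x, v⟫ = fderiv ℝ f x v :=
      InnerProductSpace.toDual_symm_apply
    have hgradg : ⟪gradient g x, v⟫ = fderiv ℝ g x v :=
      InnerProductSpace.toDual_symm_apply
    rw [hw, inner_sub_left, hgradf, hgradg, hfg, sub_self]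
  have hmem : w ∈ (ℝ ∙ n)ᗮᗮ := by
    intro u hu
    rw [real_inner_comm]
    exact key u (Submodule.mem_orthogonal_singleton_iff_inner_left.mp hu)
  rw [Submodule.orthogonal_orthogonal] at hmem
  rcases Submodule.mem_span_singleton.mp hmem with ⟨c, hc⟩
  exact ⟨c, hc.symm⟩
end

section
/- Let d ≥ 1, let f, g : (Fin d → ℝ) → ℝ be differentiable at a point x : Fin d → ℝ, and let n : Fin d → ℝ. Suppose f(y) = g(y) for every y with ∑ᵢ (yᵢ − xᵢ)·nᵢ = 0. Define the jump Jⱼ = ∂ⱼf(x) − ∂ⱼg(x), where ∂ⱼ denotes the partial derivative in the j-th coordinate direction. Then the rank-one tensor Jⱼ·nₖ is symmetric: Jⱼ·nₖ = Jₖ·nⱼ for all j, k ∈ Fin d. (This is the jump-symmetry property underlying the discrete Schwarz theorem: the jump of the gradient of a function continuous across a hyperplane is a symmetric tensor when multiplied by the normal.) -/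
/-!
Along every direction `v` tangent to the hyperplane `{y | (y - x) ⬝ᵥ n = 0}` the functions `f` and
`g` agree on the line through `x`, so their directional derivatives agree there: the kernel of
`v ↦ v ⬝ᵥ n` lies in the kernel of `Df(x) - Dg(x)`. The vector `n k • eⱼ - n j • eₖ` is in that
kernel, which is exactly `J j * n k = J k * n j`.
-/

open Matrix

theorem LinearMap.smul_apply_comm_of_ker_le {R M N : Type*} [CommRing R] [AddCommGroup M]
    [Module R M] [AddCommGroup N] [Module R N] {φ : M →ₗ[R] R} {L : M →ₗ[R] N}
    (h : LinearMap.ker φ ≤ LinearMap.ker L) (a b : M) : φ b • L a = φ a • L b := by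
  have hmem : φ b • a - φ a • b ∈ LinearMap.ker φ := by
    simp [mul_comm]
  simpa [sub_eq_zero] using h hmem

section

variable {𝕜 E F : Type*} [NontriviallyNormedField 𝕜] [NormedAddCommGroup E] [NormedSpace 𝕜 E]
  [NormedAddCommGroup F] [NormedSpace 𝕜 F] {f g : E → F} {x : E}

theorem fderiv_apply_eq_of_eq_on_line (hf : DifferentiableAt 𝕜 f x)
    (hg : DifferentiableAt 𝕜 g x) {v : E} (h : ∀ t : 𝕜, f (x + t • v) = g (x + t • v)) :
    fderiv 𝕜 f x v = fderiv 𝕜 g x v := by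
  rw [← hf.lineDeriv_eq_fderiv, ← hg.lineDeriv_eq_fderiv]
  simp only [lineDeriv, h]

theorem ker_le_ker_fderiv_sub_of_eq_on_hyperplane (hf : DifferentiableAt 𝕜 f x)
    (hg : DifferentiableAt 𝕜 g x) {φ : E →ₗ[𝕜] 𝕜} (h : ∀ y, φ (y - x) = 0 → f y = g y) :
    LinearMap.ker φ ≤ LinearMap.ker (fderiv 𝕜 f x - fderiv 𝕜 g x : E →L[𝕜] F).toLinearMap := by
  intro v hv
  rw [LinearMap.mem_ker] at hv ⊢
  have hline : ∀ t : 𝕜, f (x + t • v) = g (x + t • v) := fun t ↦ h _ (by simp [hv])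
  simp [fderiv_apply_eq_of_eq_on_line hf hg hline]

end

theorem gradient_jump_symm_general
    (d : ℕ)
    (f g : (Fin d → ℝ) → ℝ) (x n : Fin d → ℝ)
    (hf : DifferentiableAt ℝ f x) (hg : DifferentiableAt ℝ g x)
    (h : ∀ y : Fin d → ℝ, ∑ i, (y i - x i) * n i = 0 → f y = g y)
    (J : Fin d → ℝ)
    (hJ : ∀ j, J j = fderiv ℝ f x (Pi.single j 1) - fderiv ℝ g x (Pi.single j 1)) :
    ∀ j k, J j * n k = J k * n j := by
  intro j k
  have hker := ker_le_ker_fderiv_sub_of_eq_on_hyperplane hf hg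
    (φ := dotProductEquiv ℝ (Fin d) n) fun y hy ↦ h y (by simpa [dotProduct, mul_comm] using hy)
  have hsymm := LinearMap.smul_apply_comm_of_ker_le hker (Pi.single j 1) (Pi.single k 1)
  simp only [dotProductEquiv_apply_apply, dotProduct_single_one, smul_eq_mul,
    ContinuousLinearMap.coe_coe, _root_.sub_apply, ← hJ] at hsymm
  linarith

/-- Jump-symmetry property: the jump of the gradient of a function continuous across a
hyperplane with normal `n` gives a symmetric rank-one tensor `J j * n k`. -/
theorem gradient_jump_symm
    (d : ℕ) (hd : 1 ≤ d)
    (f g : (Fin d → ℝ) → ℝ) (x n : Fin d → ℝ)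
    (hf : DifferentiableAt ℝ f x) (hg : DifferentiableAt ℝ g x)
    (h : ∀ y : Fin d → ℝ, ∑ i, (y i - x i) * n i = 0 → f y = g y)
    (J : Fin d → ℝ)
    (hJ : ∀ j, J j = fderiv ℝ f x (Pi.single j 1) - fderiv ℝ g x (Pi.single j 1)) :
    ∀ j k, J j * n k = J k * n j :=
  gradient_jump_symm_general d f g x n hf hg h J hJ
end

section
/- Let nc, np : ℕ, let K : Fin 3 → Matrix (Fin nc) (Fin np) ℝ be a family of stiffness matrices (one per spatial direction) and let Dinv : Matrix (Fin nc) (Fin nc) ℝ. Assume the discrete Schwarz property: for all j, k ∈ Fin 3, (K j)ᵀ * Dinv * (K k) = (K k)ᵀ * Dinv * (K j). Then the discrete curl of the discrete gradient of any scalar field vanishes: for every Z : Fin np → ℝ and every i ∈ Fin 3, ∑_{j,k ∈ Fin 3} ε(i,j,k) • ((K j)ᵀ *ᵥ (Dinv *ᵥ ((K k) *ᵥ Z))) = 0 (the zero vector in Fin np → ℝ). -/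
open Matrix

/-- The Levi-Civita symbol on `Fin 3`. -/
def leviCivita (i j k : Fin 3) : ℝ :=
  if (i, j, k) = (0, 1, 2) ∨ (i, j, k) = (1, 2, 0) ∨ (i, j, k) = (2, 0, 1) then 1
  else if (i, j, k) = (0, 2, 1) ∨ (i, j, k) = (2, 1, 0) ∨ (i, j, k) = (1, 0, 2) then -1
  else 0

/-- Discrete curl-grad identity: under the discrete Schwarz property, the discrete
(dual) curl of the discrete primary gradient of any scalar field vanishes. -/
theorem discrete_curl_grad_eq_zero
    (nc np : ℕ)
    (K : Fin 3 → Matrix (Fin nc) (Fin np) ℝ)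
    (Dinv : Matrix (Fin nc) (Fin nc) ℝ)
    (hschwarz : ∀ j k : Fin 3, (K j)ᵀ * Dinv * (K k) = (K k)ᵀ * Dinv * (K j))
    (Z : Fin np → ℝ) (i : Fin 3) :
    ∑ j : Fin 3, ∑ k : Fin 3,
      leviCivita i j k • ((K j)ᵀ *ᵥ (Dinv *ᵥ ((K k) *ᵥ Z))) = (0 : Fin np → ℝ) := by
  have h : ∀ j k : Fin 3, (K j)ᵀ *ᵥ (Dinv *ᵥ ((K k) *ᵥ Z))
      = ((K j)ᵀ * Dinv * (K k)) *ᵥ Z := by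
    intro j k; simp [mulVec_mulVec, Matrix.mul_assoc]
  simp_rw [h]
  fin_cases i <;>
    simp [Fin.sum_univ_three, leviCivita] <;>
    [rw [hschwarz 1 2]; rw [hschwarz 0 2]; rw [hschwarz 0 1]] <;>
    module
end

section
/- Let nc, np : ℕ, let K : Fin 3 → Matrix (Fin nc) (Fin np) ℝ and Dinv : Matrix (Fin nc) (Fin nc) ℝ. Assume the discrete Schwarz property: for all j, k ∈ Fin 3, (K j)ᵀ * Dinv * (K k) = (K k)ᵀ * Dinv * (K j). Then the discrete divergence of the discrete curl of any vector field vanishes: for every A : Fin 3 → (Fin np → ℝ), ∑_{i,j,k ∈ Fin 3} ε(i,j,k) • ((K i)ᵀ *ᵥ (Dinv *ᵥ ((K j) *ᵥ (A k)))) = 0 (the zero vector in Fin np → ℝ). -/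
open Matrix

lemma lc000 : leviCivita 0 0 0 = 0 := rfl
lemma lc001 : leviCivita 0 0 1 = 0 := rfl
lemma lc002 : leviCivita 0 0 2 = 0 := rfl
lemma lc010 : leviCivita 0 1 0 = 0 := rfl
lemma lc011 : leviCivita 0 1 1 = 0 := rfl
lemma lc012 : leviCivita 0 1 2 = 1 := rfl
lemma lc020 : leviCivita 0 2 0 = 0 := rfl
lemma lc021 : leviCivita 0 2 1 = -1 := rfl
lemma lc022 : leviCivita 0 2 2 = 0 := rfl
lemma lc100 : leviCivita 1 0 0 = 0 := rfl
lemma lc101 : leviCivita 1 0 1 = 0 := rfl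
lemma lc102 : leviCivita 1 0 2 = -1 := rfl
lemma lc110 : leviCivita 1 1 0 = 0 := rfl
lemma lc111 : leviCivita 1 1 1 = 0 := rfl
lemma lc112 : leviCivita 1 1 2 = 0 := rfl
lemma lc120 : leviCivita 1 2 0 = 1 := rfl
lemma lc121 : leviCivita 1 2 1 = 0 := rfl
lemma lc122 : leviCivita 1 2 2 = 0 := rfl
lemma lc200 : leviCivita 2 0 0 = 0 := rfl
lemma lc201 : leviCivita 2 0 1 = 1 := rfl
lemma lc202 : leviCivita 2 0 2 = 0 := rfl
lemma lc210 : leviCivita 2 1 0 = -1 := rfl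
lemma lc211 : leviCivita 2 1 1 = 0 := rfl
lemma lc212 : leviCivita 2 1 2 = 0 := rfl
lemma lc220 : leviCivita 2 2 0 = 0 := rfl
lemma lc221 : leviCivita 2 2 1 = 0 := rfl
lemma lc222 : leviCivita 2 2 2 = 0 := rfl

/-- Discrete div-curl identity: under the discrete Schwarz property, the discrete
(dual) divergence of the discrete primary curl of any vector field vanishes. -/
theorem discrete_div_curl_eq_zero
    (nc np : ℕ)
    (K : Fin 3 → Matrix (Fin nc) (Fin np) ℝ)
    (Dinv : Matrix (Fin nc) (Fin nc) ℝ)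
    (hschwarz : ∀ j k : Fin 3, (K j)ᵀ * Dinv * (K k) = (K k)ᵀ * Dinv * (K j))
    (A : Fin 3 → Fin np → ℝ) :
    ∑ i : Fin 3, ∑ j : Fin 3, ∑ k : Fin 3,
      leviCivita i j k • ((K i)ᵀ *ᵥ (Dinv *ᵥ ((K j) *ᵥ (A k)))) = (0 : Fin np → ℝ) := by
  have key : ∀ i j k : Fin 3,
      (K i)ᵀ *ᵥ (Dinv *ᵥ ((K j) *ᵥ (A k))) = ((K i)ᵀ * Dinv * (K j)) *ᵥ (A k) := by
    intro i j k
    rw [mulVec_mulVec, mulVec_mulVec]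
  simp only [key, Fin.sum_univ_three,
    lc000, lc001, lc002, lc010, lc011, lc012, lc020, lc021, lc022,
    lc100, lc101, lc102, lc110, lc111, lc112, lc120, lc121, lc122,
    lc200, lc201, lc202, lc210, lc211, lc212, lc220, lc221, lc222,
    one_smul, neg_one_smul, zero_smul, add_zero, zero_add]
  rw [hschwarz 0 1, hschwarz 0 2, hschwarz 1 2]
  abel
end

section
/- Semi-discrete energy conservation for the acoustic scheme: let n, m : ℕ, let D : Matrix (Fin n) (Fin n) ℝ and M : Matrix (Fin m) (Fin m) ℝ be symmetric matrices and K : Matrix (Fin n) (Fin m) ℝ any matrix. Let v : ℝ → (Fin n → ℝ) and p : ℝ → (Fin m → ℝ) be functions with derivatives vd and pd (i.e., ∀ t, HasDerivAt v (vd t) t and HasDerivAt p (pd t) t), satisfying for all t: D *ᵥ (vd t) + K *ᵥ (p t) = 0 and M *ᵥ (pd t) − Kᵀ *ᵥ (v t) = 0. Then the total discrete energy is conserved: for every t, (v t) ⬝ᵥ (D *ᵥ v t) + (p t) ⬝ᵥ (M *ᵥ p t) = (v 0) ⬝ᵥ (D *ᵥ v 0) + (p 0) ⬝ᵥ (M *ᵥ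 p 0). -/
open Matrix

/-!
By symmetry of `D` and `M` the energy `E = v ⬝ᵥ D v + p ⬝ᵥ M p` has derivative
`2 (v ⬝ᵥ D v̇ + p ⬝ᵥ M ṗ)`. The scheme replaces `D v̇` by `-K p` and `M ṗ` by `Kᵀ v`, and the two
coupling terms `v ⬝ᵥ K p` and `p ⬝ᵥ Kᵀ v` cancel, so `E' = 0` and `E` is constant.
-/

section

variable {𝕜 ι κ : Type*} [NontriviallyNormedField 𝕜] [Fintype ι]
  {u w : 𝕜 → ι → 𝕜} {u' w' : ι → 𝕜} {t : 𝕜}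

theorem HasDerivAt.dotProduct (hu : HasDerivAt u u' t) (hw : HasDerivAt w w' t) :
    HasDerivAt (fun s => u s ⬝ᵥ w s) (u' ⬝ᵥ w t + u t ⬝ᵥ w') t := by
  simp only [_root_.dotProduct, ← Finset.sum_add_distrib]
  exact HasDerivAt.fun_sum fun i _ => (hasDerivAt_pi.1 hu i).mul (hasDerivAt_pi.1 hw i)

theorem HasDerivAt.mulVec (A : Matrix κ ι 𝕜) (hu : HasDerivAt u u' t) :
    HasDerivAt (fun s => A *ᵥ u s) (A *ᵥ u') t := by
  refine hasDerivAt_pi.2 fun i => ?_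
  simp only [Matrix.mulVec, _root_.dotProduct]
  exact HasDerivAt.fun_sum fun j _ => (hasDerivAt_pi.1 hu j).const_mul (A i j)

theorem HasDerivAt.dotProduct_mulVec_self {A : Matrix ι ι 𝕜} (hA : A.IsSymm)
    (hu : HasDerivAt u u' t) :
    HasDerivAt (fun s => u s ⬝ᵥ (A *ᵥ u s)) (2 * (u t ⬝ᵥ (A *ᵥ u'))) t := by
  convert hu.dotProduct (hu.mulVec A) using 1
  rw [← dotProduct_transpose_mulVec, hA.eq, two_mul]

end

/-- Semi-discrete energy conservation for the acoustic scheme. -/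
theorem acoustic_semidiscrete_energy_conservation
    (n m : ℕ)
    (D : Matrix (Fin n) (Fin n) ℝ) (M : Matrix (Fin m) (Fin m) ℝ)
    (K : Matrix (Fin n) (Fin m) ℝ)
    (hD : D.IsSymm) (hM : M.IsSymm)
    (v : ℝ → Fin n → ℝ) (p : ℝ → Fin m → ℝ)
    (vd : ℝ → Fin n → ℝ) (pd : ℝ → Fin m → ℝ)
    (hv : ∀ t : ℝ, HasDerivAt v (vd t) t) (hp : ∀ t : ℝ, HasDerivAt p (pd t) t)
    (h1 : ∀ t : ℝ, D *ᵥ vd t + K *ᵥ p t = 0)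
    (h2 : ∀ t : ℝ, M *ᵥ pd t - Kᵀ *ᵥ v t = 0) :
    ∀ t : ℝ, v t ⬝ᵥ (D *ᵥ v t) + p t ⬝ᵥ (M *ᵥ p t) =
      v 0 ⬝ᵥ (D *ᵥ v 0) + p 0 ⬝ᵥ (M *ᵥ p 0) := by
  have energy_deriv_eq_zero :
      ∀ s, HasDerivAt (fun s => v s ⬝ᵥ (D *ᵥ v s) + p s ⬝ᵥ (M *ᵥ p s)) 0 s := by
    intro s
    have hDv : D *ᵥ vd s = -(K *ᵥ p s) := eq_neg_of_add_eq_zero_left (h1 s)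
    have hMp : M *ᵥ pd s = Kᵀ *ᵥ v s := sub_eq_zero.mp (h2 s)
    refine (((hv s).dotProduct_mulVec_self hD).add ((hp s).dotProduct_mulVec_self hM)).congr_deriv ?_
    rw [hDv, hMp, dotProduct_neg, dotProduct_transpose_mulVec]
    ring
  exact fun t => is_const_of_deriv_eq_zero (fun s => (energy_deriv_eq_zero s).differentiableAt)
    (fun s => (energy_deriv_eq_zero s).deriv) t 0
end

section
/- Fully discrete energy conservation for the Crank–Nicolson acoustic scheme: let n, m : ℕ, let D : Matrix (Fin n) (Fin n) ℝ and M : Matrix (Fin m) (Fin m) ℝ be symmetric matrices, K : Matrix (Fin n) (Fin m) ℝ any matrix, and Δt : ℝ. Suppose v, v₁ : Fin n → ℝ and p, p₁ : Fin m → ℝ satisfy D *ᵥ (v₁ − v) + Δt • (K *ᵥ ((1/2) • (p + p₁))) = 0 and M *ᵥ (p₁ − p) − Δt • (Kᵀ *ᵥ ((1/2) • (v + v₁))) = 0. Then the discrete total energy is exactly conserved: v₁ ⬝ᵥ (D *ᵥ v₁) + p₁ ⬝ᵥ (M *ᵥ p₁) = v ⬝ᵥ (D *ᵥ v) + p ⬝ᵥ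 (M *ᵥ p). -/
open Matrix

/-- Fully discrete energy conservation for the Crank–Nicolson acoustic scheme. -/
theorem acoustic_crank_nicolson_energy_conservation
    (n m : ℕ)
    (D : Matrix (Fin n) (Fin n) ℝ) (M : Matrix (Fin m) (Fin m) ℝ)
    (K : Matrix (Fin n) (Fin m) ℝ)
    (hD : D.IsSymm) (hM : M.IsSymm) (Δt : ℝ)
    (v v₁ : Fin n → ℝ) (p p₁ : Fin m → ℝ)
    (h1 : D *ᵥ (v₁ - v) + Δt • (K *ᵥ ((1/2 : ℝ) • (p + p₁))) = 0)
    (h2 : M *ᵥ (p₁ - p) - Δt • (Kᵀ *ᵥ ((1/2 : ℝ) • (v + v₁))) = 0) :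
    v₁ ⬝ᵥ (D *ᵥ v₁) + p₁ ⬝ᵥ (M *ᵥ p₁) = v ⬝ᵥ (D *ᵥ v) + p ⬝ᵥ (M *ᵥ p) := by
  have e1 := congrArg (fun w => (v + v₁) ⬝ᵥ w) h1
  have e2 := congrArg (fun w => (p + p₁) ⬝ᵥ w) h2
  simp only [dotProduct_add, dotProduct_sub, dotProduct_smul, mulVec_smul,
    mulVec_add, mulVec_sub, dotProduct_zero, smul_eq_mul, add_dotProduct,
    sub_dotProduct] at e1 e2
  have hsymD : ∀ x y : Fin n → ℝ, x ⬝ᵥ (D *ᵥ y) = y ⬝ᵥ (D *ᵥ x) := by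
    intro x y
    rw [dotProduct_mulVec, ← mulVec_transpose, hD.eq, dotProduct_comm]
  have hsymM : ∀ x y : Fin m → ℝ, x ⬝ᵥ (M *ᵥ y) = y ⬝ᵥ (M *ᵥ x) := by
    intro x y
    rw [dotProduct_mulVec, ← mulVec_transpose, hM.eq, dotProduct_comm]
  have hK : ∀ (x : Fin n → ℝ) (y : Fin m → ℝ), x ⬝ᵥ (K *ᵥ y) = y ⬝ᵥ (Kᵀ *ᵥ x) := by
    intro x y
    rw [dotProduct_mulVec, ← mulVec_transpose, dotProduct_comm]
  rw [hK v p, hK v₁ p, hK v p₁, hK v₁ p₁, hsymD v₁ v] at e1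
  rw [hsymM p p₁] at e2
  linarith [e1, e2]
end

section
/- Semi-discrete energy conservation for the Maxwell-GLM scheme: let V, P, W, Q be finite-dimensional real inner product spaces and let C : W →ₗ[ℝ] V, G : P →ₗ[ℝ] V, H : Q →ₗ[ℝ] W be linear maps, with adjoints C*, G*, H*. Let B : ℝ → V, p : ℝ → P, E : ℝ → W, q : ℝ → Q have derivatives Bd, pd, Ed, qd (HasDerivAt at every t) satisfying for all t: Bd t = −(C (E t) + G (p t)); pd t = G* (B t); Ed t = C* (B t) + H (q t); qd t = −H* (E t). Then the total energy ‖B t‖² + ‖p t‖² + ‖E t‖² + ‖q t‖² is independent of t (equal to its value at t = 0). -/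
/-!
The right-hand side of the scheme is skew-adjoint: each of `C`, `G`, `H` appears once and its
adjoint once with the opposite sign, so the inner product of the state with its time derivative
vanishes identically. Hence the energy, whose derivative is twice that inner product, is constant.
-/

open LinearMap

theorem maxwellGLM_inner_rhs_eq_zero {V P W Q : Type*}
    [NormedAddCommGroup V] [InnerProductSpace ℝ V] [FiniteDimensional ℝ V]
    [NormedAddCommGroup P] [InnerProductSpace ℝ P] [FiniteDimensional ℝ P]
    [NormedAddCommGroup W] [InnerProductSpace ℝ W] [FiniteDimensional ℝ W]
    [NormedAddCommGroup Q] [InnerProductSpace ℝ Q] [FiniteDimensional ℝ Q]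
    (C : W →ₗ[ℝ] V) (G : P →ₗ[ℝ] V) (H : Q →ₗ[ℝ] W)
    (b : V) (p : P) (e : W) (q : Q) :
    inner ℝ b (-(C e + G p)) + inner ℝ p (adjoint G b) + inner ℝ e (adjoint C b + H q)
      + inner ℝ q (-(adjoint H e)) = 0 := by
  simp only [inner_neg_right, inner_add_right, adjoint_inner_right,
    real_inner_comm b (C e), real_inner_comm b (G p), real_inner_comm e (H q)]
  ring

/-- Semi-discrete energy conservation for the Maxwell-GLM scheme. -/
theorem maxwell_glm_semidiscrete_energy_conservation
    {V P W Q : Type*}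
    [NormedAddCommGroup V] [InnerProductSpace ℝ V] [FiniteDimensional ℝ V]
    [NormedAddCommGroup P] [InnerProductSpace ℝ P] [FiniteDimensional ℝ P]
    [NormedAddCommGroup W] [InnerProductSpace ℝ W] [FiniteDimensional ℝ W]
    [NormedAddCommGroup Q] [InnerProductSpace ℝ Q] [FiniteDimensional ℝ Q]
    (C : W →ₗ[ℝ] V) (G : P →ₗ[ℝ] V) (H : Q →ₗ[ℝ] W)
    (B : ℝ → V) (p : ℝ → P) (E : ℝ → W) (q : ℝ → Q)
    (Bd : ℝ → V) (pd : ℝ → P) (Ed : ℝ → W) (qd : ℝ → Q)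
    (hB : ∀ t : ℝ, HasDerivAt B (Bd t) t)
    (hp : ∀ t : ℝ, HasDerivAt p (pd t) t)
    (hE : ∀ t : ℝ, HasDerivAt E (Ed t) t)
    (hq : ∀ t : ℝ, HasDerivAt q (qd t) t)
    (h1 : ∀ t : ℝ, Bd t = -(C (E t) + G (p t)))
    (h2 : ∀ t : ℝ, pd t = LinearMap.adjoint G (B t))
    (h3 : ∀ t : ℝ, Ed t = LinearMap.adjoint C (B t) + H (q t))
    (h4 : ∀ t : ℝ, qd t = -(LinearMap.adjoint H (E t))) :
    ∀ t : ℝ,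
      ‖B t‖ ^ 2 + ‖p t‖ ^ 2 + ‖E t‖ ^ 2 + ‖q t‖ ^ 2 =
      ‖B 0‖ ^ 2 + ‖p 0‖ ^ 2 + ‖E 0‖ ^ 2 + ‖q 0‖ ^ 2 := by
  have henergy : ∀ s : ℝ,
      HasDerivAt (fun s ↦ ‖B s‖ ^ 2 + ‖p s‖ ^ 2 + ‖E s‖ ^ 2 + ‖q s‖ ^ 2) 0 s := by
    intro s
    refine ((((hB s).norm_sq.add (hp s).norm_sq).add (hE s).norm_sq).add
      (hq s).norm_sq).congr_deriv ?_
    rw [h1, h2, h3, h4]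
    linear_combination 2 * maxwellGLM_inner_rhs_eq_zero C G H (B s) (p s) (E s) (q s)
  exact fun t ↦ is_const_of_deriv_eq_zero (fun s ↦ (henergy s).differentiableAt)
    (fun s ↦ (henergy s).deriv) t 0
end

section
/- Fully discrete energy conservation for the Crank–Nicolson Maxwell-GLM scheme: let V, P, W, Q be finite-dimensional real inner product spaces, let C : W →ₗ[ℝ] V, G : P →ₗ[ℝ] V, H : Q →ₗ[ℝ] W be linear maps with adjoints C*, G*, H*, and let Δt : ℝ. Suppose B, B₁ ∈ V, p, p₁ ∈ P, E, E₁ ∈ W, q, q₁ ∈ Q satisfy: B₁ − B + Δt • (C ((1/2) • (E + E₁)) + G ((1/2) • (p + p₁))) = 0; p₁ − p − Δt • G* ((1/2) • (B + B₁)) = 0; E₁ − E − Δt • C* ((1/2) • (B + B₁)) − Δt • H ((1/2) • (q + q₁)) = 0; q₁ − q + Δt • H* ((1/2) • (E + E₁)) = 0. Then ‖B₁‖² + ‖p₁‖² + ‖E₁‖² + ‖q₁‖² = ‖B‖² + ‖p‖² + ‖E‖² + ‖q‖². -/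
/-! The Crank–Nicolson increment of each field is `Δt` times a skew coupling evaluated at the
midpoints `x̄ = (x + x₁) / 2`, and `‖x₁‖² - ‖x‖² = 2 ⟪x̄, x₁ - x⟫`. Summing over the four fields,
each coupling `L` appears once as `-⟪ȳ, L x̄⟫` and once as `⟪x̄, L* ȳ⟫`, so the energy change
vanishes for every `Δt`. -/

open scoped InnerProductSpace

lemma norm_sq_sub_norm_sq_eq_two_mul_inner_midpoint {E : Type*} [NormedAddCommGroup E]
    [InnerProductSpace ℝ E] (x x₁ : E) :
    ‖x₁‖ ^ 2 - ‖x‖ ^ 2 = 2 * ⟪(1/2 : ℝ) • (x + x₁), x₁ - x⟫_ℝ := by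
  simp only [inner_smul_left, inner_add_left, inner_sub_right, real_inner_self_eq_norm_sq,
    real_inner_comm x x₁, RCLike.conj_to_real]
  ring

lemma real_inner_adjoint_apply_comm {X Y : Type*}
    [NormedAddCommGroup X] [InnerProductSpace ℝ X] [FiniteDimensional ℝ X]
    [NormedAddCommGroup Y] [InnerProductSpace ℝ Y] [FiniteDimensional ℝ Y]
    (L : X →ₗ[ℝ] Y) (x : X) (y : Y) :
    ⟪x, LinearMap.adjoint L y⟫_ℝ = ⟪y, L x⟫_ℝ := by
  rw [LinearMap.adjoint_inner_right, real_inner_comm]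

/-- Fully discrete energy conservation for the Crank–Nicolson Maxwell-GLM scheme. -/
theorem maxwell_glm_crank_nicolson_energy_conservation
    {V P W Q : Type*}
    [NormedAddCommGroup V] [InnerProductSpace ℝ V] [FiniteDimensional ℝ V]
    [NormedAddCommGroup P] [InnerProductSpace ℝ P] [FiniteDimensional ℝ P]
    [NormedAddCommGroup W] [InnerProductSpace ℝ W] [FiniteDimensional ℝ W]
    [NormedAddCommGroup Q] [InnerProductSpace ℝ Q] [FiniteDimensional ℝ Q]
    (C : W →ₗ[ℝ] V) (G : P →ₗ[ℝ] V) (H : Q →ₗ[ℝ] W) (Δt : ℝ)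
    (B B₁ : V) (p p₁ : P) (E E₁ : W) (q q₁ : Q)
    (h1 : B₁ - B + Δt • (C ((1/2 : ℝ) • (E + E₁)) + G ((1/2 : ℝ) • (p + p₁))) = 0)
    (h2 : p₁ - p - Δt • LinearMap.adjoint G ((1/2 : ℝ) • (B + B₁)) = 0)
    (h3 : E₁ - E - Δt • LinearMap.adjoint C ((1/2 : ℝ) • (B + B₁))
        - Δt • H ((1/2 : ℝ) • (q + q₁)) = 0)
    (h4 : q₁ - q + Δt • LinearMap.adjoint H ((1/2 : ℝ) • (E + E₁)) = 0) :
    ‖B₁‖ ^ 2 + ‖p₁‖ ^ 2 + ‖E₁‖ ^ 2 + ‖q₁‖ ^ 2 =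
    ‖B‖ ^ 2 + ‖p‖ ^ 2 + ‖E‖ ^ 2 + ‖q‖ ^ 2 := by
  set Bm : V := (1/2 : ℝ) • (B + B₁)
  set pm : P := (1/2 : ℝ) • (p + p₁)
  set Em : W := (1/2 : ℝ) • (E + E₁)
  set qm : Q := (1/2 : ℝ) • (q + q₁)
  have dB : B₁ - B = -(Δt • (C Em + G pm)) := eq_neg_of_add_eq_zero_left h1
  have dp : p₁ - p = Δt • LinearMap.adjoint G Bm := sub_eq_zero.mp h2
  have dE : E₁ - E = Δt • LinearMap.adjoint C Bm + Δt • H qm := by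
    rwa [sub_sub, sub_eq_zero] at h3
  have dq : q₁ - q = -(Δt • LinearMap.adjoint H Em) := eq_neg_of_add_eq_zero_left h4
  rw [← sub_eq_zero]
  calc ‖B₁‖ ^ 2 + ‖p₁‖ ^ 2 + ‖E₁‖ ^ 2 + ‖q₁‖ ^ 2 - (‖B‖ ^ 2 + ‖p‖ ^ 2 + ‖E‖ ^ 2 + ‖q‖ ^ 2)
      = 2 * (⟪Bm, B₁ - B⟫_ℝ + ⟪pm, p₁ - p⟫_ℝ + ⟪Em, E₁ - E⟫_ℝ + ⟪qm, q₁ - q⟫_ℝ) := by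
        linear_combination norm_sq_sub_norm_sq_eq_two_mul_inner_midpoint B B₁
          + norm_sq_sub_norm_sq_eq_two_mul_inner_midpoint p p₁
          + norm_sq_sub_norm_sq_eq_two_mul_inner_midpoint E E₁
          + norm_sq_sub_norm_sq_eq_two_mul_inner_midpoint q q₁
    _ = 0 := by
        rw [dB, dp, dE, dq]
        simp only [inner_neg_right, inner_add_right, real_inner_smul_right,
          real_inner_adjoint_apply_comm]
        ring
end

section
/- Energy stability of the semi-implicit projection step for the incompressible Euler equations: let n, m : ℕ, let D : Matrix (Fin n) (Fin n) ℝ be positive definite, let K : Matrix (Fin m) (Fin n) ℝ be any matrix, and let ρ, Δt : ℝ with ρ > 0. Suppose v₁, v⋆ : Fin n → ℝ and p : Fin m → ℝ satisfy ρ • (D *ᵥ v₁) = ρ • (D *ᵥ v⋆) − Δt • (Kᵀ *ᵥ p) (the discrete momentum update) and K *ᵥ v₁ = 0 (the discrete divergence-free condition). Then the kinetic energy does not increase: v₁ ⬝ᵥ (D *ᵥ v₁) ≤ v⋆ ⬝ᵥ (D *ᵥ v⋆). -/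
/-!
Dotting the momentum update with `v₁` kills the pressure term, because
`v₁ ⬝ᵥ (Kᵀ *ᵥ p) = (K *ᵥ v₁) ⬝ᵥ p = 0`; hence `⟪v₁, v₁⟫_D = ⟪v₁, v⋆⟫_D` in the inner product
defined by `D`, i.e. `v₁` is the `D`-orthogonal projection of `v⋆` onto the divergence-free
vectors. Pythagoras then gives `⟪v⋆, v⋆⟫_D = ⟪v₁, v₁⟫_D + ⟪v⋆ - v₁, v⋆ - v₁⟫_D ≥ ⟪v₁, v₁⟫_D`.
-/

open Matrix

namespace Matrix

variable {ι κ R : Type*} [Fintype ι] [Fintype κ]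

theorem dotProduct_transpose_mulVec_eq_zero [CommSemiring R] {K : Matrix κ ι R} {v : ι → R}
    (hKv : K *ᵥ v = 0) (p : κ → R) : v ⬝ᵥ (Kᵀ *ᵥ p) = 0 := by
  rw [dotProduct_mulVec, vecMul_transpose, hKv, zero_dotProduct]

theorem IsSymm.dotProduct_mulVec_comm [CommSemiring R] {D : Matrix ι ι R} (hD : D.IsSymm)
    (v w : ι → R) : w ⬝ᵥ (D *ᵥ v) = v ⬝ᵥ (D *ᵥ w) := by
  rw [dotProduct_mulVec, ← hD.eq, vecMul_transpose, hD.eq, dotProduct_comm]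

theorem PosSemidef.dotProduct_mulVec_le_of_eq {D : Matrix ι ι ℝ} (hD : D.PosSemidef)
    {v w : ι → ℝ} (hvw : v ⬝ᵥ (D *ᵥ v) = v ⬝ᵥ (D *ᵥ w)) :
    v ⬝ᵥ (D *ᵥ v) ≤ w ⬝ᵥ (D *ᵥ w) := by
  have hsymm : D.IsSymm := hD.isHermitian
  have hpyth : (w - v) ⬝ᵥ (D *ᵥ (w - v)) = w ⬝ᵥ (D *ᵥ w) - v ⬝ᵥ (D *ᵥ v) := by
    rw [mulVec_sub, dotProduct_sub, sub_dotProduct, sub_dotProduct,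
      hsymm.dotProduct_mulVec_comm v w]
    linarith
  have hnonneg : 0 ≤ (w - v) ⬝ᵥ (D *ᵥ (w - v)) := hD.dotProduct_mulVec_nonneg (w - v)
  linarith

end Matrix

/-- Energy stability of the semi-implicit projection step for the
incompressible Euler equations. -/
theorem projection_step_energy_stability
    (n m : ℕ)
    (D : Matrix (Fin n) (Fin n) ℝ) (hD : D.PosDef)
    (K : Matrix (Fin m) (Fin n) ℝ) (ρ Δt : ℝ) (hρ : 0 < ρ)
    (v₁ vstar : Fin n → ℝ) (p : Fin m → ℝ)
    (h1 : ρ • (D *ᵥ v₁) = ρ • (D *ᵥ vstar) - Δt • (Kᵀ *ᵥ p))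
    (h2 : K *ᵥ v₁ = 0) :
    v₁ ⬝ᵥ (D *ᵥ v₁) ≤ vstar ⬝ᵥ (D *ᵥ vstar) := by
  have hdot := congrArg (v₁ ⬝ᵥ ·) h1
  simp only [dotProduct_sub, dotProduct_smul, dotProduct_transpose_mulVec_eq_zero h2,
    smul_eq_mul, mul_zero, sub_zero] at hdot
  have hcross : v₁ ⬝ᵥ (D *ᵥ v₁) = v₁ ⬝ᵥ (D *ᵥ vstar) := mul_left_cancel₀ hρ.ne' hdot
  exact hD.posSemidef.dotProduct_mulVec_le_of_eq hcross
end
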